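/- Every 1-track is invertible: for every 1-path γ in M, letting γ̄ denote the reversed 1-path γ̄(t) = γ(1−t) and c_x the constant 1-path at x ∈ M, the composition γ∘γ̄ is rank-1 homotopic to c_{γ(0)}, and γ̄∘γ is rank-1 homotopic to c_{γ(1)}. -/

import Mathlib

open scoped Manifold

variable (E : Type*) [NormedAddCommGroup E] [NormedSpace ℝ E] [FiniteDimensional ℝ E]
variable {M : Type*} [TopologicalSpace M] [ChartedSpace E M]
  [IsManifold 𝓘(ℝ, E) (⊤ : ℕ∞) M]

/-- A 1-path in `M`: a smooth map `ℝ → M` that is constant near `(-∞, 0]` and near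
`[1, ∞)` (in the sense of the `ε`-conditions). -/
def IsOnePath (γ : ℝ → M) : Prop :=
  ContMDiff 𝓘(ℝ, ℝ) 𝓘(ℝ, E) (⊤ : ℕ∞) γ ∧
    ∃ ε > (0 : ℝ), (∀ t ≤ ε, γ t = γ 0) ∧ (∀ t, 1 - ε ≤ t → γ t = γ 1)

/-- A 2-path in `M`, as a smooth map `ℝ × ℝ → M` with coordinates `(s, t)`,
constant near the boundary in each variable, whose images at `t = 0` and `t = 1`
are single points. -/
def IsTwoPath (g : ℝ × ℝ → M) : Prop :=
  ContMDiff 𝓘(ℝ, ℝ × ℝ) 𝓘(ℝ, E) (⊤ : ℕ∞) g ∧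
    (∃ ε > (0 : ℝ),
      (∀ s t, s ≤ ε → g (s, t) = g (0, t)) ∧
      (∀ s t, 1 - ε ≤ s → g (s, t) = g (1, t)) ∧
      (∀ s t, t ≤ ε → g (s, t) = g (s, 0)) ∧
      (∀ s t, 1 - ε ≤ t → g (s, t) = g (s, 1))) ∧
    (∀ s s', g (s, 0) = g (s', 0)) ∧ (∀ s s', g (s, 1) = g (s', 1))

/-- A rank-1 homotopy: a 2-path whose differential has rank at most 1 at every point. -/
def IsRank1Homotopy (h : ℝ × ℝ → M) : Prop :=
  IsTwoPath E h ∧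
    ∀ p : ℝ × ℝ,
      Module.finrank ℝ
        (LinearMap.range (mfderiv 𝓘(ℝ, ℝ × ℝ) 𝓘(ℝ, E) h p).toLinearMap) ≤ 1

/-- Two 1-paths are rank-1 homotopic if they are joined by a rank-1 homotopy. -/
def Rank1Homotopic (γ γ' : ℝ → M) : Prop :=
  ∃ h : ℝ × ℝ → M, IsRank1Homotopy E h ∧ (∀ t, h (0, t) = γ t) ∧ (∀ t, h (1, t) = γ' t)

/-- Composition of 1-paths. -/
noncomputable def compPath (γ₁ γ₂ : ℝ → M) : ℝ → M := fun t =>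
  if t ≤ 1 / 2 then γ₁ (2 * t) else γ₂ (2 * t - 1)

/-!
Composing `γ` with its reverse gives `γ ∘ τ` for the tent map `τ t = min (2t) (2 - 2t)`. Since `γ`
is constant on `[1 - ε, ∞)`, the corner of `τ` may be smoothed without changing `γ ∘ τ`, so the
composite is `γ ∘ f` with `f` smooth and small near `0` and `1`. Shrinking `f` to `0` by a smooth
step `σ`, `(s, t) ↦ γ ((1 - σ s) * f t)` contracts it to the constant path; every such map factors
through `γ : ℝ → M`, so its differential has rank at most one. The second claim is the first one
for the reversed path.
-/

open scoped ContDiff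

theorem finrank_range_mfderiv_comp_le_one {F G H N : Type*} [NormedAddCommGroup F]
    [NormedSpace ℝ F] [NormedAddCommGroup G] [NormedSpace ℝ G] [TopologicalSpace H]
    {I : ModelWithCorners ℝ G H} [TopologicalSpace N] [ChartedSpace H N]
    {γ : ℝ → N} {ρ : F → ℝ} {p : F}
    (hγ : MDifferentiableAt 𝓘(ℝ, ℝ) I γ (ρ p)) (hρ : DifferentiableAt ℝ ρ p) :
    Module.finrank ℝ (LinearMap.range (mfderiv 𝓘(ℝ, F) I (γ ∘ ρ) p).toLinearMap) ≤ 1 := by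
  have : Module.Finite ℝ (TangentSpace 𝓘(ℝ, ℝ) (ρ p)) := inferInstanceAs (Module.Finite ℝ ℝ)
  rw [mfderiv_comp p hγ hρ.mdifferentiableAt, ContinuousLinearMap.toLinearMap_comp]
  calc _ ≤ Module.finrank ℝ (LinearMap.range (mfderiv 𝓘(ℝ, ℝ) I γ (ρ p)).toLinearMap) :=
        Submodule.finrank_mono (LinearMap.range_comp_le_range _ _)
    _ ≤ Module.finrank ℝ ℝ := LinearMap.finrank_range_le _
    _ = 1 := Module.finrank_self ℝ

/-- The tent map `min (2 * t) (2 - 2 * t)` with its corner smoothed: a convex combination of the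
two branches that switches from the first to the second on `[1/2 - η, 1/2 + η]`. -/
noncomputable def smoothTent (η t : ℝ) : ℝ :=
  (1 - Real.smoothTransition ((t - (1 / 2 - η)) / (2 * η))) * (2 * t) +
    Real.smoothTransition ((t - (1 / 2 - η)) / (2 * η)) * (2 - 2 * t)

theorem contDiff_smoothTent (η : ℝ) : ContDiff ℝ ∞ (smoothTent η) := by
  unfold smoothTent
  have : ContDiff ℝ ∞ fun t : ℝ => Real.smoothTransition ((t - (1 / 2 - η)) / (2 * η)) :=
    Real.smoothTransition.contDiff.comp (by fun_prop)
  fun_prop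

theorem smoothTent_of_le {η t : ℝ} (hη : 0 ≤ η) (ht : t ≤ 1 / 2 - η) : smoothTent η t = 2 * t := by
  rw [smoothTent, Real.smoothTransition.zero_of_nonpos
    (div_nonpos_of_nonpos_of_nonneg (by linarith) (by linarith))]
  ring

theorem smoothTent_of_ge {η t : ℝ} (hη : 0 < η) (ht : 1 / 2 + η ≤ t) :
    smoothTent η t = 2 - 2 * t := by
  rw [smoothTent, Real.smoothTransition.one_of_one_le
    (by rw [le_div_iff₀ (by linarith)]; linarith)]
  ring

theorem one_sub_two_mul_le_smoothTent {η t : ℝ} (ht₁ : 1 / 2 - η ≤ t) (ht₂ : t ≤ 1 / 2 + η) :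
    1 - 2 * η ≤ smoothTent η t := by
  have h₀ := Real.smoothTransition.nonneg ((t - (1 / 2 - η)) / (2 * η))
  have h₁ := Real.smoothTransition.le_one ((t - (1 / 2 - η)) / (2 * η))
  rw [smoothTent]
  nlinarith

theorem compPath_reverse_eq_comp_smoothTent {α : Type*} {γ : ℝ → α} {η : ℝ} (hη : 0 < η)
    (hγ : ∀ t, 1 - 2 * η ≤ t → γ t = γ 1) :
    compPath γ (fun t => γ (1 - t)) = fun t => γ (smoothTent η t) := by
  ext t
  rcases le_or_gt t (1 / 2 - η) with ht | ht
  · simp only [compPath, if_pos (show t ≤ 1 / 2 by linarith), smoothTent_of_le hη.le ht]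
  rcases le_or_gt (1 / 2 + η) t with ht' | ht'
  · simp only [compPath, if_neg (show ¬t ≤ 1 / 2 by linarith), smoothTent_of_ge hη ht']
    ring_nf
  · rw [hγ _ (one_sub_two_mul_le_smoothTent ht.le ht'.le), compPath]
    split_ifs <;> exact hγ _ (by linarith)

section

variable {G : Type*} [NormedAddCommGroup G] [NormedSpace ℝ G] {N : Type*} [TopologicalSpace N]
  [ChartedSpace G N]

theorem rank1Homotopic_comp_const {γ : ℝ → N} (hγ : ContMDiff 𝓘(ℝ, ℝ) 𝓘(ℝ, G) ∞ γ) {ε : ℝ}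
    (hε : 0 ≤ ε) (hγ0 : ∀ t ≤ ε, γ t = γ 0) {f : ℝ → ℝ} (hf : ContDiff ℝ ∞ f) {δ : ℝ}
    (hδ : 0 < δ) (hf0 : ∀ t ≤ δ, f t ≤ ε) (hf1 : ∀ t, 1 - δ ≤ t → f t ≤ ε) :
    Rank1Homotopic G (fun t => γ (f t)) (fun _ => γ 0) := by
  set σ : ℝ → ℝ := fun s => Real.smoothTransition (3 * s - 1)
  have hσ0 : ∀ s ≤ 1 / 3, σ s = 0 := fun s hs =>
    Real.smoothTransition.zero_of_nonpos (by linarith)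
  have hσ1 : ∀ s, 2 / 3 ≤ s → σ s = 1 := fun s hs =>
    Real.smoothTransition.one_of_one_le (by linarith)
  have hρ : ContDiff ℝ ∞ fun p : ℝ × ℝ => (1 - σ p.1) * f p.2 :=
    (contDiff_const.sub (Real.smoothTransition.contDiff.comp (by fun_prop))).mul
      (hf.comp contDiff_snd)
  have hconst : ∀ s t, f t ≤ ε → γ ((1 - σ s) * f t) = γ 0 := fun s t ht =>
    hγ0 _ (by nlinarith [Real.smoothTransition.nonneg (3 * s - 1),
      Real.smoothTransition.le_one (3 * s - 1)])
  have hmargin : 0 < min δ (1 / 3) := by positivity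
  refine ⟨fun p => γ ((1 - σ p.1) * f p.2), ⟨⟨hγ.comp hρ.contMDiff,
    ⟨min δ (1 / 3), hmargin, fun s t hs => ?_, fun s t hs => ?_, fun s t ht => ?_, fun s t ht => ?_⟩,
    fun s s' => ?_, fun s s' => ?_⟩, fun p => ?_⟩, fun t => ?_, fun t => ?_⟩
  · show γ ((1 - σ s) * f t) = γ ((1 - σ 0) * f t)
    rw [hσ0 s (hs.trans (min_le_right _ _)), hσ0 0 (by norm_num)]
  · show γ ((1 - σ s) * f t) = γ ((1 - σ 1) * f t)
    rw [hσ1 s (by linarith [min_le_right δ (1 / 3)]), hσ1 1 (by norm_num)]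
  · exact (hconst s t (hf0 t (ht.trans (min_le_left _ _)))).trans
      (hconst s 0 (hf0 0 hδ.le)).symm
  · exact (hconst s t (hf1 t (by linarith [min_le_left δ (1 / 3)]))).trans
      (hconst s 1 (hf1 1 (by linarith))).symm
  · exact (hconst s 0 (hf0 0 hδ.le)).trans (hconst s' 0 (hf0 0 hδ.le)).symm
  · exact (hconst s 1 (hf1 1 (by linarith))).trans (hconst s' 1 (hf1 1 (by linarith))).symm
  · exact finrank_range_mfderiv_comp_le_one (ρ := fun p : ℝ × ℝ => (1 - σ p.1) * f p.2)
      (hγ.mdifferentiableAt (by simp)) (hρ.differentiable (by simp) p)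
  · show γ ((1 - σ 0) * f t) = γ (f t)
    rw [hσ0 0 (by norm_num), sub_zero, one_mul]
  · show γ ((1 - σ 1) * f t) = γ 0
    rw [hσ1 1 (by norm_num), sub_self, zero_mul]

theorem IsOnePath.reverse {γ : ℝ → N} (h : IsOnePath G γ) : IsOnePath G fun t => γ (1 - t) := by
  obtain ⟨hγ, ε, hε, hγ0, hγ1⟩ := h
  refine ⟨hγ.comp (contDiff_const.sub contDiff_id).contMDiff, ε, hε, fun t ht => ?_, fun t ht => ?_⟩
  · dsimp only
    rw [sub_zero, hγ1 _ (by linarith)]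
  · dsimp only
    rw [sub_self, hγ0 _ (by linarith)]

theorem IsOnePath.rank1Homotopic_compPath_reverse {γ : ℝ → N} (h : IsOnePath G γ) :
    Rank1Homotopic G (compPath γ (fun t => γ (1 - t))) (fun _ => γ 0) := by
  obtain ⟨hγ, ε, hε, hγ0, hγ1⟩ := h
  set η := min (ε / 2) (1 / 4)
  have hη : 0 < η := by positivity
  have hηε : 2 * η ≤ ε := by linarith [min_le_left (ε / 2) (1 / 4)]
  have hη4 : η ≤ 1 / 4 := min_le_right _ _
  rw [compPath_reverse_eq_comp_smoothTent hη fun t ht => hγ1 t (by linarith)]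
  refine rank1Homotopic_comp_const hγ hε.le hγ0 (contDiff_smoothTent η) hη (fun t ht => ?_)
    (fun t ht => ?_)
  · rw [smoothTent_of_le hη.le (by linarith)]
    linarith
  · rw [smoothTent_of_ge hη (by linarith)]
    linarith

end

theorem compPath_reverse_rank1Homotopic (γ : ℝ → M) (h : IsOnePath E γ) :
    Rank1Homotopic E (compPath γ (fun t => γ (1 - t))) (fun _ => γ 0) ∧
    Rank1Homotopic E (compPath (fun t => γ (1 - t)) γ) (fun _ => γ 1) := by
  refine ⟨h.rank1Homotopic_compPath_reverse, ?_⟩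
  simpa using h.reverse.rank1Homotopic_compPath_reverse
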